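/- Let p be an odd prime and m, n₁ positive integers, and set n = 2^m·p^{n₁}. Then the unit graph G(Z_n) has n vertices and exactly 2^{m-1}·p^{n₁}·φ(n) edges, its minimum degree equals φ(n), and its edge connectivity equals φ(n); that is, there exists a set of φ(n) edges whose deletion leaves a graph that is not connected, while deleting any set of fewer than φ(n) edges leaves a connected graph. -/

import Mathlib

/-!
For even `n`, reduction mod 2 sends units to `1`, so adjacent vertices have opposite parity: the
unit graph is bipartite with both parts of size `n / 2`. It is `φ(n)`-regular, since the
neighbours of `x` are the elements `u - x` with `u` a unit. For `n = 2 ^ m * p ^ k` with `p` an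
odd prime, `n < 4 φ(n)`, so each part has fewer than `2 φ(n)` vertices.

In a bipartite graph of minimum degree `δ` with a part `X` of fewer than `2δ` vertices, every edge
cut has at least `δ` edges: some side `A` of the cut meets `X` in `a < δ` vertices; if it meets the
other part in `b` vertices, each vertex of `A ∩ X` has at least `δ - b` neighbours outside `A`,
each vertex of `A \ X` at least `δ - a`, and `a (δ - b) + b (δ - a) ≥ δ`. Deleting the `φ(n)`
edges at a vertex isolates it.
-/

/-- The unit graph of `ZMod m`: distinct vertices `x, y` are adjacent iff `x + y` is a unit. -/
def unitGraph (m : ℕ) : SimpleGraph (ZMod m) where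
  Adj x y := x ≠ y ∧ IsUnit (x + y)
  symm := by
    constructor
    intro x y h
    exact ⟨h.1.symm, by rw [add_comm]; exact h.2⟩
  loopless := by
    constructor
    intro x h
    exact h.1 rfl

open Finset SimpleGraph

theorem Nat.le_mul_sub_add_mul_sub {δ a b : ℕ} (ha : a < δ) (hab : 0 < a + b) :
    δ ≤ a * (δ - b) + b * (δ - a) := by
  have hb : b ≤ b * (δ - a) := Nat.le_mul_of_pos_right _ (by omega)
  rcases Nat.eq_zero_or_pos a with rfl | ha₀
  · simpa using Nat.le_mul_of_pos_left δ hab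
  · have : δ - b ≤ a * (δ - b) := Nat.le_mul_of_pos_left _ ha₀
    omega

theorem Nat.prime_pow_lt_two_mul_totient {p : ℕ} (hp : p.Prime) (hodd : Odd p) (k : ℕ) :
    p ^ k < 2 * (p ^ k).totient := by
  cases k with
  | zero => simp
  | succ k =>
    have hp3 : p < 2 * (p - 1) := by have := hp.two_le; obtain ⟨j, rfl⟩ := hodd; omega
    rw [Nat.totient_prime_pow_succ hp, pow_succ]
    calc p ^ k * p < p ^ k * (2 * (p - 1)) :=
          Nat.mul_lt_mul_of_pos_left hp3 (pow_pos hp.pos k)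
      _ = 2 * (p ^ k * (p - 1)) := by ring

theorem Nat.two_pow_mul_prime_pow_lt_four_mul_totient {m p : ℕ} (hm : 0 < m) (hp : p.Prime)
    (hodd : Odd p) (k : ℕ) : 2 ^ m * p ^ k < 4 * (2 ^ m * p ^ k).totient := by
  obtain ⟨m, rfl⟩ := Nat.exists_eq_add_of_lt hm
  rw [Nat.totient_mul ((Nat.coprime_two_left.2 hodd).pow _ _),
    Nat.totient_prime_pow_succ Nat.prime_two, zero_add, pow_succ']
  have := Nat.prime_pow_lt_two_mul_totient hp hodd k
  have : 0 < 2 ^ m := by positivity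
  nlinarith

namespace SimpleGraph

variable {V : Type*} (G : SimpleGraph V) [DecidableRel G.Adj]

theorem card_interedges_eq_sum (s t : Finset V) :
    #(G.interedges s t) = ∑ x ∈ s, #{y ∈ t | G.Adj x y} := by
  simp only [interedges_def, card_filter, sum_product]

variable [Fintype V] [DecidableEq V]

theorem card_mul_sub_le_card_interedges {δ : ℕ} {s t u : Finset V}
    (hdeg : ∀ x ∈ s, δ ≤ G.degree x) (hnbr : ∀ x ∈ s, ∀ y, G.Adj x y → y ∈ t ∨ y ∈ u) :
    #s * (δ - #u) ≤ #(G.interedges s t) := by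
  rw [card_interedges_eq_sum, ← smul_eq_mul]
  refine card_nsmul_le_sum _ _ _ fun x hx => ?_
  have hsub : G.neighborFinset x ⊆ {y ∈ t | G.Adj x y} ∪ u := fun y hy => by
    rw [mem_neighborFinset] at hy
    rcases hnbr x hx y hy with h | h <;> simp [h, hy]
  have := (hdeg x hx).trans ((card_neighborFinset_eq_degree G x).symm.le.trans
    ((card_le_card hsub).trans (card_union_le _ _)))
  omega

omit [DecidableEq V] in
theorem IsRegularOfDegree.two_mul_card_edgeFinset {d : ℕ} (h : G.IsRegularOfDegree d) :
    2 * #G.edgeFinset = Fintype.card V * d := by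
  rw [← sum_degrees_eq_twice_card_edges, sum_congr rfl fun v _ => h.degree_eq v, sum_const,
    card_univ, smul_eq_mul]

variable {G}

theorem IsBipartiteWith.le_card_interedges_compl_of_card_inter_lt {δ : ℕ} {X A : Finset V}
    (hbip : G.IsBipartiteWith X (↑X)ᶜ) (hdeg : ∀ v, δ ≤ G.degree v) (hA : A.Nonempty)
    (hAX : #(A ∩ X) < δ) : δ ≤ #(G.interedges A Aᶜ) := by
  have h₁ : #(A ∩ X) * (δ - #(A \ X)) ≤ #(G.interedges (A ∩ X) Aᶜ) :=
    G.card_mul_sub_le_card_interedges (fun x _ => hdeg x) fun x hx y hxy => by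
      have hy : y ∉ X := hbip.mem_of_mem_adj (by simp_all) hxy
      by_cases y ∈ A <;> simp_all
  have h₂ : #(A \ X) * (δ - #(A ∩ X)) ≤ #(G.interedges (A \ X) Aᶜ) :=
    G.card_mul_sub_le_card_interedges (fun x _ => hdeg x) fun x hx y hxy => by
      have hy : y ∈ X := hbip.mem_of_mem_adj' (by simp_all) hxy.symm
      by_cases y ∈ A <;> simp_all
  have hsplit : #(G.interedges (A ∩ X) Aᶜ) + #(G.interedges (A \ X) Aᶜ) ≤
      #(G.interedges A Aᶜ) := by
    rw [← card_union_of_disjoint (interedges_disjoint_left G (disjoint_sdiff_inter A X).symm _)]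
    exact card_le_card (union_subset (interedges_mono G inter_subset_left subset_rfl)
      (interedges_mono G sdiff_subset subset_rfl))
  have hpos : 0 < #(A ∩ X) + #(A \ X) := by
    rw [card_inter_add_card_sdiff]; exact hA.card_pos
  linarith [Nat.le_mul_sub_add_mul_sub hAX hpos]

theorem IsBipartiteWith.le_card_interedges_compl {δ : ℕ} {X A : Finset V}
    (hbip : G.IsBipartiteWith X (↑X)ᶜ) (hdeg : ∀ v, δ ≤ G.degree v) (hX : #X < 2 * δ)
    (hA : A.Nonempty) (hA' : Aᶜ.Nonempty) : δ ≤ #(G.interedges A Aᶜ) := by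
  have hsplit : #(A ∩ X) + #(Aᶜ ∩ X) = #X := by
    rw [← card_union_of_disjoint (disjoint_compl_right.mono inter_subset_left inter_subset_left),
      ← union_inter_distrib_right, union_compl, univ_inter]
  rcases lt_or_ge #(A ∩ X) δ with h | h
  · exact hbip.le_card_interedges_compl_of_card_inter_lt hdeg hA h
  · have := hbip.le_card_interedges_compl_of_card_inter_lt hdeg hA' (by omega)
    rwa [interedges, @Rel.card_interedges_comm _ _ _ G.symm, compl_compl] at this

theorem connected_deleteEdges_of_forall_le_card_interedges [Nonempty V] {k : ℕ}
    (hcut : ∀ A : Finset V, A.Nonempty → Aᶜ.Nonempty → k ≤ #(G.interedges A Aᶜ))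
    (S : Finset (Sym2 V)) (hS : #S < k) : (G.deleteEdges S).Connected := by
  refine (connected_iff _).2 ⟨fun u v => ?_, inferInstance⟩
  by_contra huv
  let A : Finset V := {x | (G.deleteEdges S).Reachable u x}
  have hcross : ∀ e ∈ G.interedges A Aᶜ, s(e.1, e.2) ∈ S := by
    intro e he
    obtain ⟨h₁, h₂, hadj⟩ := G.mem_interedges_iff.1 he
    by_contra heS
    simp only [A, mem_compl, mem_filter, mem_univ, true_and] at h₁ h₂
    exact h₂ (h₁.trans (deleteEdges_adj.2 ⟨hadj, heS⟩).reachable)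
  have hinj : Set.InjOn (fun e : V × V => s(e.1, e.2)) (G.interedges A Aᶜ) := by
    intro e he e' he' hee'
    rcases Sym2.eq_iff.1 hee' with ⟨h₁, h₂⟩ | ⟨h₁, -⟩
    · exact Prod.ext h₁ h₂
    · have hA : e'.2 ∈ A := h₁ ▸ (G.mem_interedges_iff.1 he).1
      exact absurd hA (mem_compl.1 (G.mem_interedges_iff.1 he').2.1)
  have := hcut A ⟨u, by simp [A]⟩ ⟨v, by simpa [A] using huv⟩
  have := card_le_card (image_subset_iff.2 hcross)
  rw [card_image_of_injOn hinj] at this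
  omega

omit [Fintype V] [DecidableEq V] [DecidableRel G.Adj] in
theorem not_connected_deleteEdges_incidenceSet [Nontrivial V] (v : V) :
    ¬(G.deleteEdges (G.incidenceSet v)).Connected := by
  intro h
  obtain ⟨w, hw⟩ := exists_ne v
  obtain ⟨p⟩ := h.preconnected v w
  cases p with
  | nil => exact hw rfl
  | cons ha _ =>
    obtain ⟨hadj, hinc⟩ := deleteEdges_adj.1 ha
    exact hinc (G.mk'_mem_incidenceSet_left_iff.2 hadj)

end SimpleGraph

namespace ZMod

theorem ncard_setOf_isUnit_add {n : ℕ} [NeZero n] (v : ZMod n) :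
    {y : ZMod n | IsUnit (v + y)}.ncard = n.totient := by
  rw [← Nat.card_coe_set_eq, ← card_units_eq_totient, ← Nat.card_eq_fintype_card]
  exact Nat.card_congr (((Equiv.addLeft v).subtypeEquiv fun _ => Iff.rfl).trans
    Submonoid.unitsTypeEquivIsUnitSubmonoid.toEquiv.symm)

variable {n : ℕ} (h2 : 2 ∣ n)

theorem castHom_two_eq_one_of_isUnit {z : ZMod n} (hz : IsUnit z) :
    castHom h2 (ZMod 2) z = 1 := by
  have := isUnit_iff_ne_zero.1 (hz.map (castHom h2 (ZMod 2)))
  generalize castHom h2 (ZMod 2) z = a at this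
  revert a; decide

theorem two_mul_card_ker_castHom_two [NeZero n] :
    2 * #{x : ZMod n | castHom h2 (ZMod 2) x = 0} = n := by
  have := (castHom h2 (ZMod 2)).toAddMonoidHom.ker.card_mul_index
  rw [AddSubgroup.index_ker, AddMonoidHom.range_eq_top.2 (castHom_surjective h2),
    AddSubgroup.card_top, Nat.card_zmod, Nat.card_zmod,
    Nat.card_congr (Equiv.subtypeEquivRight fun _ => AddMonoidHom.mem_ker),
    Nat.card_eq_fintype_card, Fintype.card_subtype] at this
  rwa [mul_comm] at this

end ZMod

variable {n : ℕ}

instance [NeZero n] : DecidableRel (unitGraph n).Adj :=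
  fun x y => inferInstanceAs (Decidable (x ≠ y ∧ IsUnit (x + y)))

theorem unitGraph_adj_iff_of_two_dvd (h2 : 2 ∣ n) {x y : ZMod n} :
    (unitGraph n).Adj x y ↔ IsUnit (x + y) := by
  refine ⟨And.right, fun h => ⟨?_, h⟩⟩
  rintro rfl
  have := ZMod.castHom_two_eq_one_of_isUnit h2 h
  rw [map_add] at this
  generalize ZMod.castHom h2 (ZMod 2) x = a at this
  revert a; decide

theorem unitGraph_isBipartiteWith [NeZero n] (h2 : 2 ∣ n) :
    (unitGraph n).IsBipartiteWith ↑({x | ZMod.castHom h2 (ZMod 2) x = 0} : Finset (ZMod n))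
      (↑({x | ZMod.castHom h2 (ZMod 2) x = 0} : Finset (ZMod n)))ᶜ where
  disjoint := disjoint_compl_right
  mem_of_adj x y hxy := by
    have := ZMod.castHom_two_eq_one_of_isUnit h2 hxy.2
    simp only [coe_filter, mem_univ, true_and, Set.mem_ofPred_eq, Set.mem_compl_iff]
    rw [map_add] at this
    generalize ZMod.castHom h2 (ZMod 2) x = a at this
    generalize ZMod.castHom h2 (ZMod 2) y = b at this
    revert a b; decide

theorem unitGraph_ncard_neighborSet [NeZero n] (h2 : 2 ∣ n) (v : ZMod n) :
    ((unitGraph n).neighborSet v).ncard = n.totient := by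
  simpa only [neighborSet, unitGraph_adj_iff_of_two_dvd h2] using ZMod.ncard_setOf_isUnit_add v

theorem unitGraph_isRegularOfDegree [NeZero n] (h2 : 2 ∣ n) :
    (unitGraph n).IsRegularOfDegree n.totient := fun v => by
  rw [← card_neighborSet_eq_degree, ← Nat.card_eq_fintype_card, Nat.card_coe_set_eq,
    unitGraph_ncard_neighborSet h2]

theorem unitGraph_connected_deleteEdges_of_card_lt [NeZero n] (h2 : 2 ∣ n)
    (hn : n < 4 * n.totient) (S : Finset (Sym2 (ZMod n))) (hS : #S < n.totient) :
    ((unitGraph n).deleteEdges S).Connected := by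
  refine connected_deleteEdges_of_forall_le_card_interedges (fun A hA hA' => ?_) S hS
  refine (unitGraph_isBipartiteWith h2).le_card_interedges_compl
    (fun v => (unitGraph_isRegularOfDegree h2 v).ge) ?_ hA hA'
  have := ZMod.two_mul_card_ker_castHom_two h2
  omega

theorem unitGraph_twoPowTimesOddPrimePow_card_edges_minDegree_edgeConnectivity_general (p m n₁ : ℕ)
    (hp : p.Prime) (hodd : Odd p) (hm : 0 < m) :
    Nat.card (ZMod (2 ^ m * p ^ n₁)) = 2 ^ m * p ^ n₁ ∧
    (unitGraph (2 ^ m * p ^ n₁)).edgeSet.ncard =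
      2 ^ (m - 1) * p ^ n₁ * Nat.totient (2 ^ m * p ^ n₁) ∧
    IsLeast (Set.range fun v : ZMod (2 ^ m * p ^ n₁) =>
        ((unitGraph (2 ^ m * p ^ n₁)).neighborSet v).ncard)
      (Nat.totient (2 ^ m * p ^ n₁)) ∧
    ((∃ S : Finset (Sym2 (ZMod (2 ^ m * p ^ n₁))), ↑S ⊆ (unitGraph (2 ^ m * p ^ n₁)).edgeSet ∧
         S.card = Nat.totient (2 ^ m * p ^ n₁) ∧ ¬((unitGraph (2 ^ m * p ^ n₁)).deleteEdges ↑S).Connected) ∧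
     (∀ S : Finset (Sym2 (ZMod (2 ^ m * p ^ n₁))), ↑S ⊆ (unitGraph (2 ^ m * p ^ n₁)).edgeSet →
         S.card < Nat.totient (2 ^ m * p ^ n₁) → ((unitGraph (2 ^ m * p ^ n₁)).deleteEdges ↑S).Connected)) := by
  set n := 2 ^ m * p ^ n₁
  have hn : n = 2 * (2 ^ (m - 1) * p ^ n₁) := by
    rw [← mul_assoc, ← pow_succ', Nat.sub_add_cancel hm]
  have h2 : 2 ∣ n := ⟨_, hn⟩
  have : NeZero n := ⟨by positivity [hp.pos]⟩
  have : Nontrivial (ZMod n) := ZMod.nontrivial_iff.2 (by omega)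
  have hreg := unitGraph_isRegularOfDegree h2
  refine ⟨Nat.card_zmod n, ?_, ⟨⟨0, unitGraph_ncard_neighborSet h2 0⟩, ?_⟩, ⟨?_, ?_⟩⟩
  · rw [← coe_edgeFinset, Set.ncard_coe_finset]
    refine Nat.eq_of_mul_eq_mul_left two_pos (hreg.two_mul_card_edgeFinset.trans ?_)
    rw [ZMod.card, ← mul_assoc, ← hn]
  · rintro _ ⟨v, rfl⟩
    exact (unitGraph_ncard_neighborSet h2 v).ge
  · refine ⟨(unitGraph n).incidenceFinset 0, ?_, ?_, ?_⟩
    · simpa using (unitGraph n).incidenceSet_subset 0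
    · rw [card_incidenceFinset_eq_degree, hreg.degree_eq]
    · simpa using not_connected_deleteEdges_incidenceSet (G := unitGraph n) 0
  · intro S _ hS
    exact unitGraph_connected_deleteEdges_of_card_lt h2
      (Nat.two_pow_mul_prime_pow_lt_four_mul_totient hm hp hodd n₁) S hS

theorem unitGraph_twoPowTimesOddPrimePow_card_edges_minDegree_edgeConnectivity (p m n₁ : ℕ)
    (hp : p.Prime) (hodd : Odd p) (hm : 0 < m) (hn₁ : 0 < n₁) :
    Nat.card (ZMod (2 ^ m * p ^ n₁)) = 2 ^ m * p ^ n₁ ∧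
    (unitGraph (2 ^ m * p ^ n₁)).edgeSet.ncard =
      2 ^ (m - 1) * p ^ n₁ * Nat.totient (2 ^ m * p ^ n₁) ∧
    IsLeast (Set.range fun v : ZMod (2 ^ m * p ^ n₁) =>
        ((unitGraph (2 ^ m * p ^ n₁)).neighborSet v).ncard)
      (Nat.totient (2 ^ m * p ^ n₁)) ∧
    ((∃ S : Finset (Sym2 (ZMod (2 ^ m * p ^ n₁))), ↑S ⊆ (unitGraph (2 ^ m * p ^ n₁)).edgeSet ∧
         S.card = Nat.totient (2 ^ m * p ^ n₁) ∧ ¬((unitGraph (2 ^ m * p ^ n₁)).deleteEdges ↑S).Connected) ∧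
     (∀ S : Finset (Sym2 (ZMod (2 ^ m * p ^ n₁))), ↑S ⊆ (unitGraph (2 ^ m * p ^ n₁)).edgeSet →
         S.card < Nat.totient (2 ^ m * p ^ n₁) → ((unitGraph (2 ^ m * p ^ n₁)).deleteEdges ↑S).Connected)) :=
  unitGraph_twoPowTimesOddPrimePow_card_edges_minDegree_edgeConnectivity_general p m n₁ hp hodd hm
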